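/- arXiv:1305.3154 — 2 statements merged into one kernel-verified Lean document; each statement's English description precedes it below -/
import Mathlib

section
/- Let d ≥ 2 be an integer, Q ∈ (1,2) and p ∈ (1,2). Let (s_k)_{k≥1} and (M_k)_{k≥1} be sequences of positive integers with 3 ≤ M_k ≤ s_k for all k, s_k → ∞, M_k → ∞ and (M_k · log s_k)/s_k → 0, and let (s̃_k)_{k≥1} be a sequence of real numbers with s̃_k ≥ s_k for all k and (s̃_k − s̃_{k−1})/s_k → 0. Define w_k = Q^{−(s₁ + s₂ + ⋯ + s_k)}. Suppose (c_k)_{k≥1} is a sequence of positive real numbers satisfying c_k ≤ 2(M_k + 1)·(4·s_k^{2+2d})^{M_k}·Q^{s_k}·c_{k−1} for all k ≥ 2. Then c_k·(w_k)^p·Q^{p·s̃_k} → 0 as k → ∞; in particular, the sequence c_k·(w_k)^p·Q^{p·s_k} is bounded. -/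
/-!
Put `a k = c k * w k ^ p * Q ^ (p * st k)`. The recursion for `c` and `w (k+1) = w k * Q^(-s (k+1))`
give `a (k+1) ≤ B k * a k` with `B k = 2 (M + 1) (4 s ^ (2+2d)) ^ M * Q ^ ((1 - p) s + p (st (k+1) - st k))`,
where `s, M` are taken at `k + 1`. Since `M log s = o(s)` the polynomial factor is `exp (o(s))`,
while the power of `Q` is `exp ((1 - p + o(1)) s log Q)` with `1 - p < 0`; as `s → ∞` this forces
`B k → 0`, so eventually `a (k+1) ≤ a k / 2` and `a k → 0`. Because `s k ≤ st k`, the second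
sequence is dominated by `a`, hence bounded.
-/

open Filter Real Topology

section Asymptotics

variable {ι : Type*} {l : Filter ι} {x : ι → ℝ}

lemma tendsto_div_of_tendsto_mul_log_div {m : ι → ℝ} (hx : Tendsto x l atTop) (hm : ∀ i, 0 ≤ m i)
    (h : Tendsto (fun i => m i * log (x i) / x i) l (𝓝 0)) :
    Tendsto (fun i => m i / x i) l (𝓝 0) := by
  refine tendsto_of_tendsto_of_tendsto_of_le_of_le' tendsto_const_nhds h ?_ ?_
  · filter_upwards [hx.eventually_gt_atTop 0] with i hi using div_nonneg (hm i) hi.le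
  · filter_upwards [hx.eventually_gt_atTop 0, (tendsto_log_atTop.comp hx).eventually_ge_atTop 1]
      with i hi hlog
    gcongr
    exact le_mul_of_one_le_right (hm i) hlog

lemma tendsto_log_add_one_div {m : ι → ℝ} (hx : Tendsto x l atTop) (hm : ∀ i, 0 ≤ m i)
    (h : Tendsto (fun i => m i / x i) l (𝓝 0)) :
    Tendsto (fun i => log (m i + 1) / x i) l (𝓝 0) := by
  refine tendsto_of_tendsto_of_tendsto_of_le_of_le' tendsto_const_nhds h ?_ ?_
  · filter_upwards [hx.eventually_gt_atTop 0] with i hi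
    exact div_nonneg (log_nonneg (by linarith [hm i])) hi.le
  · filter_upwards [hx.eventually_gt_atTop 0] with i hi
    gcongr
    linarith [log_le_sub_one_of_pos (show 0 < m i + 1 by linarith [hm i])]

lemma tendsto_log_two_mul_pow_div (n : ℕ) {m : ι → ℕ} (hx : Tendsto x l atTop)
    (h : Tendsto (fun i => m i * log (x i) / x i) l (𝓝 0)) :
    Tendsto (fun i => log (2 * (m i + 1) * (4 * x i ^ n) ^ m i) / x i) l (𝓝 0) := by
  have hm : Tendsto (fun i => (m i : ℝ) / x i) l (𝓝 0) :=
    tendsto_div_of_tendsto_mul_log_div hx (fun i => (m i).cast_nonneg) h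
  have hlim := (((tendsto_const_nhds (x := log 2)).mul hx.inv_tendsto_atTop).add
    (tendsto_log_add_one_div hx (fun i => (m i).cast_nonneg) hm)).add
    ((hm.const_mul (log 4)).add (h.const_mul (n : ℝ)))
  simp only [mul_zero, add_zero, Pi.inv_apply] at hlim
  refine hlim.congr' ?_
  filter_upwards [hx.eventually_gt_atTop 0] with i hi
  rw [log_mul (by positivity) (by positivity), log_mul (by norm_num) (by positivity), log_pow,
    log_mul (by norm_num) (by positivity), log_pow]
  field_simp

lemma tendsto_mul_rpow_nhds_zero {F y : ι → ℝ} {Q L : ℝ} (hx : Tendsto x l atTop)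
    (hF : ∀ᶠ i in l, 0 < F i) (hFlog : Tendsto (fun i => log (F i) / x i) l (𝓝 0))
    (hQ : 1 < Q) (hy : Tendsto (fun i => y i / x i) l (𝓝 L)) (hL : L < 0) :
    Tendsto (fun i => F i * Q ^ y i) l (𝓝 0) := by
  have hexp : Tendsto (fun i => x i * (log (F i) / x i + y i / x i * log Q)) l atBot := by
    refine hx.atTop_mul_neg (mul_neg_of_neg_of_pos hL (log_pos hQ)) ?_
    simpa using hFlog.add (hy.mul_const (log Q))
  refine (tendsto_exp_atBot.comp hexp).congr' ?_
  filter_upwards [hx.eventually_gt_atTop 0, hF] with i hi hFi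
  rw [Function.comp_apply, mul_add, mul_div_cancel₀ _ hi.ne', ← mul_assoc, mul_div_cancel₀ _ hi.ne',
    exp_add, exp_log hFi, rpow_def_of_pos (by linarith), mul_comm (log Q)]

end Asymptotics

lemma tendsto_nhds_zero_of_le_mul {a B : ℕ → ℝ} (ha : ∀ k, 0 ≤ a k)
    (hB : Tendsto B atTop (𝓝 0)) (h : ∀ k, a (k + 1) ≤ B k * a k) :
    Tendsto a atTop (𝓝 0) := by
  refine (summable_of_ratio_norm_eventually_le (r := 1 / 2) (by norm_num) ?_).tendsto_atTop_zero
  filter_upwards [hB.eventually_le_const (show (0 : ℝ) < 1 / 2 by norm_num)] with k hk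
  rw [Real.norm_of_nonneg (ha _), Real.norm_of_nonneg (ha _)]
  exact (h k).trans (mul_le_mul_of_nonneg_right hk (ha k))

lemma mul_rpow_le_of_le_mul_rpow {Q p F x y y' c c' w w' : ℝ} (hQ : 0 < Q) (hw : 0 ≤ w)
    (hw' : w' = w * Q ^ (-x)) (hc : c' ≤ F * Q ^ x * c) :
    c' * w' ^ p * Q ^ (p * y') ≤
      F * Q ^ ((1 - p) * x + p * (y' - y)) * (c * w ^ p * Q ^ (p * y)) := by
  have hw'p : 0 ≤ w' ^ p := by rw [hw']; positivity
  calc c' * w' ^ p * Q ^ (p * y') ≤ F * Q ^ x * c * w' ^ p * Q ^ (p * y') := by gcongr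
    _ = F * c * w ^ p * Q ^ (x + -x * p + p * y') := by
      rw [hw', mul_rpow hw (rpow_nonneg hQ.le _), ← rpow_mul hQ.le, rpow_add hQ, rpow_add hQ]
      ring
    _ = F * c * w ^ p * Q ^ ((1 - p) * x + p * (y' - y) + p * y) := by ring_nf
    _ = _ := by rw [rpow_add hQ]; ring

theorem stmt5_general (d : ℕ) (Q p : ℝ) (hQ : Q ∈ Set.Ioo (1:ℝ) 2)
    (hp : p ∈ Set.Ioo (1:ℝ) 2)
    (s M : ℕ → ℕ)
    (hs_lim : Tendsto (fun k => (s k : ℝ)) atTop atTop)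
    (hMlog : Tendsto (fun k => (M k : ℝ) * Real.log (s k) / (s k)) atTop (nhds 0))
    (st : ℕ → ℝ) (hst : ∀ k, (s k : ℝ) ≤ st k)
    (hst_diff : Tendsto (fun k => (st (k + 1) - st k) / (s (k + 1) : ℝ)) atTop (nhds 0))
    (w : ℕ → ℝ)
    (hw : ∀ k, w k = Q ^ (-(∑ i ∈ Finset.range (k + 1), (s i : ℝ))))
    (c : ℕ → ℝ) (hc_pos : ∀ k, 0 < c k)
    (hc : ∀ k : ℕ, c (k + 1) ≤
      2 * ((M (k + 1) : ℝ) + 1) * (4 * (s (k + 1) : ℝ) ^ (2 + 2 * d)) ^ (M (k + 1)) *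
        Q ^ ((s (k + 1) : ℝ)) * c k) :
    Tendsto (fun k => c k * (w k) ^ p * Q ^ (p * st k)) atTop (nhds 0) ∧
    ∃ H : ℝ, ∀ k, c k * (w k) ^ p * Q ^ (p * (s k : ℝ)) ≤ H := by
  obtain ⟨hQ1, -⟩ := hQ
  obtain ⟨hp1, -⟩ := hp
  have hQ0 : 0 < Q := by linarith
  have hw_nonneg : ∀ k, 0 ≤ w k := fun k => (hw k).symm ▸ rpow_nonneg hQ0.le _
  have hw_succ : ∀ k, w (k + 1) = w k * Q ^ (-(s (k + 1) : ℝ)) := fun k => by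
    rw [hw, hw, Finset.sum_range_succ, neg_add, rpow_add hQ0]
  have hs : Tendsto (fun k => (s (k + 1) : ℝ)) atTop atTop := hs_lim.comp (tendsto_add_atTop_nat 1)
  have hexponent : Tendsto (fun k => ((1 - p) * s (k + 1) + p * (st (k + 1) - st k)) / s (k + 1))
      atTop (𝓝 (1 - p)) := by
    have h := (hst_diff.const_mul p).const_add (1 - p)
    rw [mul_zero, add_zero] at h
    refine h.congr' ?_
    filter_upwards [hs.eventually_gt_atTop 0] with k hk
    field_simp
  have hratio := tendsto_mul_rpow_nhds_zero hs
    (hs.eventually_gt_atTop 0 |>.mono fun k hk => by positivity)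
    (tendsto_log_two_mul_pow_div (2 + 2 * d) hs (hMlog.comp (tendsto_add_atTop_nat 1)))
    hQ1 hexponent (by linarith)
  have hlim : Tendsto (fun k => c k * w k ^ p * Q ^ (p * st k)) atTop (𝓝 0) :=
    tendsto_nhds_zero_of_le_mul (fun k => by have := hw_nonneg k; have := hc_pos k; positivity)
      hratio fun k => mul_rpow_le_of_le_mul_rpow hQ0 (hw_nonneg k) (hw_succ k) (hc k)
  obtain ⟨H, hH⟩ := hlim.bddAbove_range
  refine ⟨hlim, H, fun k => le_trans ?_ (hH ⟨k, rfl⟩)⟩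
  have := hw_nonneg k
  have := hc_pos k
  dsimp only
  gcongr
  · exact hQ1.le
  · exact hst k

/-- Here the index `k : ℕ` plays the role of `k+1` in the informal statement, i.e.
`s 0 = s₁`, `M 0 = M₁`, `st 0 = s̃₁`, `w 0 = w₁ = Q^{-s₁}`, `c 0 = c₁`. -/
theorem stmt5 (d : ℕ) (hd : 2 ≤ d) (Q p : ℝ) (hQ : Q ∈ Set.Ioo (1:ℝ) 2)
    (hp : p ∈ Set.Ioo (1:ℝ) 2)
    (s M : ℕ → ℕ)
    (hM3 : ∀ k, 3 ≤ M k) (hMs : ∀ k, M k ≤ s k)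
    (hs_lim : Tendsto (fun k => (s k : ℝ)) atTop atTop)
    (hM_lim : Tendsto (fun k => (M k : ℝ)) atTop atTop)
    (hMlog : Tendsto (fun k => (M k : ℝ) * Real.log (s k) / (s k)) atTop (nhds 0))
    (st : ℕ → ℝ) (hst : ∀ k, (s k : ℝ) ≤ st k)
    (hst_diff : Tendsto (fun k => (st (k + 1) - st k) / (s (k + 1) : ℝ)) atTop (nhds 0))
    (w : ℕ → ℝ)
    (hw : ∀ k, w k = Q ^ (-(∑ i ∈ Finset.range (k + 1), (s i : ℝ))))
    (c : ℕ → ℝ) (hc_pos : ∀ k, 0 < c k)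
    (hc : ∀ k : ℕ, c (k + 1) ≤
      2 * ((M (k + 1) : ℝ) + 1) * (4 * (s (k + 1) : ℝ) ^ (2 + 2 * d)) ^ (M (k + 1)) *
        Q ^ ((s (k + 1) : ℝ)) * c k) :
    Tendsto (fun k => c k * (w k) ^ p * Q ^ (p * st k)) atTop (nhds 0) ∧
    ∃ H : ℝ, ∀ k, c k * (w k) ^ p * Q ^ (p * (s k : ℝ)) ≤ H :=
  stmt5_general d Q p hQ hp s M hs_lim hMlog st hst hst_diff w hw c hc_pos hc
end

section
/- Let W ⊆ ℝ^d be a nonempty set and let x ∈ W be a porosity point of W, i.e. there exists λ > 0 such that for every r > 0 there is a point y with 0 < ‖y − x‖ < r and B(y, λ‖y − x‖) ∩ W = ∅, where B(y, ρ) is the open ball of radius ρ. Then the function f : ℝ^d → ℝ given by f(z) = dist(z, W) is 1-Lipschitz and is not Fréchet differentiable at x. -/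
/-!
At a point of `W` the distance function vanishes and is nonnegative, so it has a local minimum
there and its only possible derivative is `0`. Porosity gives points `y` arbitrarily close to `x`
whose distance to `W` is at least `λ‖y - x‖`, i.e. the function grows linearly along them,
which is incompatible with the zero derivative.
-/

open Filter Metric Set Topology

section

variable {E : Type*} [NormedAddCommGroup E]

def IsPorosityPoint (W : Set E) (x : E) : Prop :=
  ∃ lam : ℝ, 0 < lam ∧ ∀ r : ℝ, 0 < r →
    ∃ y : E, 0 < ‖y - x‖ ∧ ‖y - x‖ < r ∧ ball y (lam * ‖y - x‖) ∩ W = ∅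

lemma le_infDist_of_ball_inter_eq_empty {W : Set E} (hW : W.Nonempty) {y : E} {ρ : ℝ}
    (hball : ball y ρ ∩ W = ∅) : ρ ≤ infDist y W := by
  refine (le_infDist hW).2 fun w hw => not_lt.1 fun hlt => ?_
  exact hball.subset ⟨mem_ball'.2 hlt, hw⟩

lemma IsPorosityPoint.frequently_le_infDist {W : Set E} {x : E} (hW : W.Nonempty)
    (hx : IsPorosityPoint W x) :
    ∃ lam : ℝ, 0 < lam ∧ ∃ᶠ y in 𝓝[≠] x, lam * ‖y - x‖ ≤ infDist y W := by
  obtain ⟨lam, hlam, holes⟩ := hx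
  refine ⟨lam, hlam, ((nhdsWithin_hasBasis nhds_basis_ball _).frequently_iff).2 fun r hr => ?_⟩
  obtain ⟨y, hy_pos, hy_lt, hy_hole⟩ := holes r hr
  refine ⟨y, ⟨mem_ball_iff_norm.2 hy_lt, ?_⟩, le_infDist_of_ball_inter_eq_empty hW hy_hole⟩
  exact sub_ne_zero.1 (norm_pos_iff.1 hy_pos)

variable [NormedSpace ℝ E]

lemma not_differentiableAt_of_isLocalMin_of_frequently_linear_growth {f : E → ℝ} {x : E}
    (hmin : IsLocalMin f x) {c : ℝ} (hc : 0 < c)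
    (hgrowth : ∃ᶠ y in 𝓝[≠] x, c * ‖y - x‖ ≤ f y - f x) :
    ¬ DifferentiableAt ℝ f x := by
  intro hdiff
  have hderiv : HasFDerivAt f (0 : E →L[ℝ] ℝ) x :=
    hmin.hasFDerivAt_eq_zero hdiff.hasFDerivAt ▸ hdiff.hasFDerivAt
  have hsmall : ∀ᶠ y in 𝓝[≠] x, ‖f y - f x‖ ≤ c / 2 * ‖y - x‖ := by
    refine nhdsWithin_le_nhds ((hderiv.isLittleO.def (half_pos hc)).mono fun y hy => ?_)
    simpa using hy
  obtain ⟨y, ⟨hy_large, hy_small⟩, hy_ne⟩ :=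
    ((hgrowth.and_eventually hsmall).and_eventually self_mem_nhdsWithin).exists
  have hy_pos : 0 < ‖y - x‖ := norm_pos_iff.2 (sub_ne_zero.2 hy_ne)
  have : c * ‖y - x‖ ≤ c / 2 * ‖y - x‖ := hy_large.trans ((le_abs_self _).trans hy_small)
  nlinarith

end

theorem stmt9_general (d : ℕ) (W : Set (EuclideanSpace ℝ (Fin d)))
    (x : EuclideanSpace ℝ (Fin d)) (hx : x ∈ W)
    (hpor : ∃ lam : ℝ, 0 < lam ∧ ∀ r : ℝ, 0 < r →
      ∃ y : EuclideanSpace ℝ (Fin d), 0 < ‖y - x‖ ∧ ‖y - x‖ < r ∧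
        Metric.ball y (lam * ‖y - x‖) ∩ W = ∅) :
    LipschitzWith 1 (fun z : EuclideanSpace ℝ (Fin d) => Metric.infDist z W) ∧
    ¬ DifferentiableAt ℝ (fun z : EuclideanSpace ℝ (Fin d) => Metric.infDist z W) x := by
  refine ⟨lipschitz_infDist_pt W, ?_⟩
  have hfx : infDist x W = 0 := infDist_zero_of_mem hx
  have hmin : IsLocalMin (infDist · W) x :=
    Eventually.of_forall fun _ => hfx.trans_le infDist_nonneg
  obtain ⟨lam, hlam, hgrowth⟩ := IsPorosityPoint.frequently_le_infDist ⟨x, hx⟩ hpor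
  exact not_differentiableAt_of_isLocalMin_of_frequently_linear_growth hmin hlam
    (by simpa only [hfx, sub_zero] using hgrowth)

theorem stmt9 (d : ℕ) (W : Set (EuclideanSpace ℝ (Fin d))) (hW : W.Nonempty)
    (x : EuclideanSpace ℝ (Fin d)) (hx : x ∈ W)
    (hpor : ∃ lam : ℝ, 0 < lam ∧ ∀ r : ℝ, 0 < r →
      ∃ y : EuclideanSpace ℝ (Fin d), 0 < ‖y - x‖ ∧ ‖y - x‖ < r ∧
        Metric.ball y (lam * ‖y - x‖) ∩ W = ∅) :
    LipschitzWith 1 (fun z : EuclideanSpace ℝ (Fin d) => Metric.infDist z W) ∧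
    ¬ DifferentiableAt ℝ (fun z : EuclideanSpace ℝ (Fin d) => Metric.infDist z W) x :=
  stmt9_general d W x hx hpor
end
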